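/- arXiv:2506.09180 — 2 statements merged into one kernel-verified Lean document; each statement's English description precedes it below -/
import Mathlib

section
/- For every horizon T ≥ 1, every state s, and all nonnegative integers L_1, L_2 with L_1 + L_2 ≤ |s|, one has J^A_T(s, L_1 + L_2) = J^A_T(s̄_{L_1}, L_2) + L_1·C_o. -/
open Finset

/-- System parameters: offloading cost, penalty cost, AMA probability,
local-processing probability, and arrival probabilities. -/
structure Params where
  Co : ℝ
  Cp : ℝ
  pa : ℝ
  mu : ℝ
  p : ℕ → ℝ

variable {N : ℕ}

/-- Partial sum `S_j(s) = ∑_{i=1}^j n_i` (components of `s` are 0-indexed). -/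
def S (s : Fin N → ℕ) (j : ℕ) : ℕ :=
  ∑ i ∈ Finset.univ.filter fun i : Fin N => (i : ℕ) < j, s i

/-- Total number of tasks `|s|`. -/
def tot (s : Fin N → ℕ) : ℕ := S s N

/-- The state obtained by offloading the `L` most imminent tasks of `s`:
`(s̄_L)_i = max(S_i(s) − L, 0) − max(S_{i−1}(s) − L, 0)` (truncated ℕ-subtraction). -/
def offload (s : Fin N → ℕ) (L : ℕ) : Fin N → ℕ :=
  fun i => (S s ((i : ℕ) + 1) - L) - (S s (i : ℕ) - L)

/-- Deadline shifting: `shift(s) = (n_2, …, n_N, 0)`. -/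
def shift (s : Fin N → ℕ) : Fin N → ℕ :=
  fun i => if h : (i : ℕ) + 1 < N then s ⟨(i : ℕ) + 1, h⟩ else 0

/-- Arrival vector `a_k`: the `k`-th standard unit vector for `1 ≤ k ≤ N`, zero for `k = 0`. -/
def avec (k : ℕ) : Fin N → ℕ := fun i => if (i : ℕ) + 1 = k then 1 else 0

/-- Local processing: remove one task of smallest deadline (identity on the zero state). -/
def proc (s : Fin N → ℕ) : Fin N → ℕ :=
  fun i => if s i ≠ 0 ∧ ∀ j : Fin N, j < i → s j = 0 then s i - 1 else s i

/-- `s''_{Lk} = shift(s̄_L) + a_k`. -/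
def sdd (s : Fin N → ℕ) (L k : ℕ) : Fin N → ℕ :=
  fun i => shift (offload s L) i + avec k i

/-- `s'_{Lk} = proc(s''_{Lk})`. -/
def sd (s : Fin N → ℕ) (L k : ℕ) : Fin N → ℕ := proc (sdd s L k)

/-- Instantaneous cost with the AMA: `𝒞^A(s,L) = C_o·L + C_p·max(n_1 − L, 0)`. -/
def costA (P : Params) (s : Fin N → ℕ) (L : ℕ) : ℝ :=
  P.Co * L + P.Cp * ((S s 1 - L : ℕ) : ℝ)

/-- Instantaneous cost without the AMA: `𝒞^Ā(s) = C_p·n_1`. -/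
def costNA (P : Params) (s : Fin N → ℕ) : ℝ := P.Cp * (S s 1 : ℕ)

/-- Expected instantaneous cost `𝒞(s,L)`. -/
def cost (P : Params) (s : Fin N → ℕ) (L : ℕ) : ℝ :=
  P.pa * costA P s L + (1 - P.pa) * costNA P s

/-- The dynamic-programming minimization, given the future-cost function `G`. -/
noncomputable def JofG (P : Params) (G : (Fin N → ℕ) → ℕ → ℝ) (s : Fin N → ℕ) : ℝ :=
  (Finset.range (tot s + 1)).inf' (Finset.nonempty_range_iff.mpr (Nat.succ_ne_zero _))
    fun L => cost P s L + P.pa * G s L + (1 - P.pa) * G s 0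

/-- `G^A_T(s,L)`, defined by recursion on the horizon `T`. -/
noncomputable def GA (P : Params) : ℕ → (Fin N → ℕ) → ℕ → ℝ
  | 0, _, _ => 0
  | T + 1, s, L =>
      P.mu * ∑ k ∈ Finset.range (N + 1), P.p k * JofG P (GA P T) (sd s L k)
        + (1 - P.mu) * ∑ k ∈ Finset.range (N + 1), P.p k * JofG P (GA P T) (sdd s L k)

/-- `J_T(s)` for horizon `T ≥ 1`. -/
noncomputable def J (P : Params) (T : ℕ) (s : Fin N → ℕ) : ℝ := JofG P (GA P (T - 1)) s

/-- `J^A_T(s,L) = 𝒞^A(s,L) + G^A_{T−1}(s,L)`. -/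
noncomputable def JA (P : Params) (T : ℕ) (s : Fin N → ℕ) (L : ℕ) : ℝ :=
  costA P s L + GA P (T - 1) s L

/-- `J^A_T(s) = min_{0 ≤ L ≤ |s|} J^A_T(s,L)`. -/
noncomputable def JAmin (P : Params) (T : ℕ) (s : Fin N → ℕ) : ℝ :=
  (Finset.range (tot s + 1)).inf' (Finset.nonempty_range_iff.mpr (Nat.succ_ne_zero _))
    (JA P T s)

/-- `J^Ā_T(s) = 𝒞^Ā(s) + G^A_{T−1}(s,0)`. -/
noncomputable def JNA (P : Params) (T : ℕ) (s : Fin N → ℕ) : ℝ :=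
  costNA P s + GA P (T - 1) s 0

/-- The optimal offloading decision: the smallest minimizer of `L ↦ J^A_T(s,L)`
over `{0,…,|s|}`. -/
noncomputable def Lstar (P : Params) (T : ℕ) (s : Fin N → ℕ) : ℕ :=
  sInf {L | L ≤ tot s ∧ ∀ L' ≤ tot s, JA P T s L ≤ JA P T s L'}

/-- The smallest deadline `d(s)` carried by a task of `s` (1-indexed). -/
noncomputable def dmin (s : Fin N → ℕ) : ℕ := sInf {j | 0 < S s j}

/-- `sa` is adjacent to `s`. -/
def Adjacent (s sa : Fin N → ℕ) : Prop :=
  (s ≠ 0 ∧ ∃ j, 1 ≤ j ∧ j ≤ dmin s ∧ sa = s + avec j) ∨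
    (s = 0 ∧ ∃ j, 1 ≤ j ∧ j ≤ N ∧ sa = avec j)

/-- `L_g`: the number of excessive tasks, `max_{1 ≤ j ≤ M} max(S_j(s) − (j−1), 0)`. -/
def Lg (s : Fin N → ℕ) (M : ℕ) : ℕ := (Finset.Icc 1 M).sup fun j => S s j - (j - 1)

/-- `Γ_j = ∑_{i=1}^j γ_i` for the parameters `γ` of Definition 2
(`γ_1 = 0`, `γ_j = min(n_j, j−1−∑_{i<j} γ_i)` for `2 ≤ j ≤ M`, `γ_j = 0` for `j > M`). -/
def Gam (s : Fin N → ℕ) (M : ℕ) : ℕ → ℕ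
  | 0 => 0
  | j + 1 =>
      if 2 ≤ j + 1 ∧ j + 1 ≤ M then
        Gam s M j + min (S s (j + 1) - S s j) (j - Gam s M j)
      else Gam s M j

/-- The lean state of `s`: `n^ℓ_i = max(γ_i, n^r_i)` where `s^r = s̄_{L_g}`. -/
def leanState (s : Fin N → ℕ) (M : ℕ) : Fin N → ℕ :=
  fun i => max (Gam s M ((i : ℕ) + 1) - Gam s M (i : ℕ)) (offload s (Lg s M) i)

/-- `F(s,L) = J^Ā_T(s̄_L) + L·C_o`. -/
noncomputable def F (P : Params) (T : ℕ) (s : Fin N → ℕ) (L : ℕ) : ℝ :=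
  JNA P T (offload s L) + L * P.Co

lemma S_succ_lem (s : Fin N → ℕ) (j : ℕ) (hj : j < N) :
    S s (j + 1) = S s j + s ⟨j, hj⟩ := by
  unfold S
  have : (Finset.univ.filter fun i : Fin N => (i : ℕ) < j + 1) =
      insert ⟨j, hj⟩ (Finset.univ.filter fun i : Fin N => (i : ℕ) < j) := by
    ext i
    simp [Fin.ext_iff]
    omega
  rw [this, Finset.sum_insert (by simp)]
  ring

lemma S_succ_ge (s : Fin N → ℕ) (j : ℕ) (hj : N ≤ j) :
    S s (j + 1) = S s j := by
  unfold S
  apply Finset.sum_congr _ fun _ _ => rfl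
  ext i
  have := i.isLt
  simp
  omega

lemma S_offload (s : Fin N → ℕ) (L j : ℕ) :
    S (offload s L) j = S s j - L := by
  induction j with
  | zero => simp [S]
  | succ j ih =>
    by_cases hj : j < N
    · have h2 := S_succ_lem (offload s L) j hj
      have h3 : offload s L ⟨j, hj⟩ = (S s (j + 1) - L) - (S s j - L) := rfl
      have hm : S s j ≤ S s (j + 1) := by
        have h1 := S_succ_lem s j hj
        omega
      rw [h2, h3, ih]
      omega
    · rw [S_succ_ge _ j (by omega), S_succ_ge _ j (by omega), ih]

lemma offload_offload (s : Fin N → ℕ) (L1 L2 : ℕ) :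
    offload (offload s L1) L2 = offload s (L1 + L2) := by
  funext i
  rw [show offload (offload s L1) L2 i
        = (S (offload s L1) ((i : ℕ) + 1) - L2) - (S (offload s L1) (i : ℕ) - L2) from rfl,
    S_offload, S_offload,
    show offload s (L1 + L2) i
        = (S s ((i : ℕ) + 1) - (L1 + L2)) - (S s (i : ℕ) - (L1 + L2)) from rfl]
  omega

lemma sdd_split (s : Fin N → ℕ) (L1 L2 k : ℕ) :
    sdd (offload s L1) L2 k = sdd s (L1 + L2) k := by
  unfold sdd
  rw [offload_offload]

lemma GA_split (P : Params) (t : ℕ) (s : Fin N → ℕ) (L1 L2 : ℕ) :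
    GA P t s (L1 + L2) = GA P t (offload s L1) L2 := by
  cases t with
  | zero => rfl
  | succ t => simp only [GA, sd, sdd_split]

/-- J^A_T(s, L₁+L₂) = J^A_T(s̄_{L₁}, L₂) + L₁·C_o. -/
theorem JA_add_split {N : ℕ} (hN : 1 ≤ N)
    (P : Params) (hCo : 0 < P.Co) (hCoCp : P.Co < P.Cp)
    (hpa0 : 0 ≤ P.pa) (hpa1 : P.pa ≤ 1) (hmu0 : 0 ≤ P.mu) (hmu1 : P.mu ≤ 1)
    (hp : ∀ k ≤ N, 0 ≤ P.p k) (hpsum : ∑ k ∈ Finset.range (N + 1), P.p k = 1)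
    (T : ℕ) (hT : 1 ≤ T) (s : Fin N → ℕ) (L1 L2 : ℕ)
    (h : L1 + L2 ≤ tot s) :
    JA P T s (L1 + L2) = JA P T (offload s L1) L2 + L1 * P.Co := by
  unfold JA costA
  rw [GA_split, S_offload]
  have : S s 1 - (L1 + L2) = S s 1 - L1 - L2 := by omega
  rw [this]
  push_cast
  ring
end

section
/- Let s be a state and s^a a state adjacent to s. Then offloading the single most imminent task from s^a yields s, i.e., (s^a)̄_1 = s, and consequently for every horizon T ≥ 1 and every L ∈ {1,…,|s^a|} one has J^A_T(s^a, L) = J^A_T(s, L−1) + C_o. -/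
open Finset

variable {N : ℕ}

section Aux

lemma S_succ' (s : Fin N → ℕ) (j : ℕ) (h : j < N) :
    S s (j + 1) = S s j + s ⟨j, h⟩ := by
  unfold S
  rw [show (Finset.univ.filter fun i : Fin N => (i : ℕ) < j + 1)
      = insert (⟨j, h⟩ : Fin N) (Finset.univ.filter fun i : Fin N => (i : ℕ) < j) by
    ext i; simp [Fin.ext_iff]; omega]
  rw [Finset.sum_insert (by simp)]
  ring

lemma S_add' (s t : Fin N → ℕ) (j : ℕ) : S (s + t) j = S s j + S t j := by
  unfold S
  simp [Finset.sum_add_distrib]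

lemma S_avec' (j0 j : ℕ) (h1 : 1 ≤ j0) (hN : j0 ≤ N) :
    S (avec j0 : Fin N → ℕ) j = if j0 ≤ j then 1 else 0 := by
  have h' : j0 - 1 < N := by omega
  unfold S avec
  have hfe : (fun i : Fin N => if (i : ℕ) + 1 = j0 then (1 : ℕ) else 0)
      = fun i => if i = (⟨j0 - 1, h'⟩ : Fin N) then 1 else 0 := by
    funext i
    simp only [Fin.ext_iff]
    exact if_congr (by omega) rfl rfl
  rw [show (∑ i ∈ Finset.univ.filter fun i : Fin N => (i : ℕ) < j,
      if (i : ℕ) + 1 = j0 then (1 : ℕ) else 0)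
      = ∑ i ∈ Finset.univ.filter fun i : Fin N => (i : ℕ) < j,
      if i = (⟨j0 - 1, h'⟩ : Fin N) then 1 else 0 from congrArg _ hfe]
  rw [Finset.sum_ite_eq' _ (⟨j0 - 1, h'⟩ : Fin N) (fun _ => 1)]
  simp only [Finset.mem_filter, Finset.mem_univ, true_and]
  by_cases hc : j0 ≤ j
  · rw [if_pos (by omega), if_pos hc]
  · rw [if_neg (by omega), if_neg hc]

lemma S_zero_lt_dmin (s : Fin N → ℕ) (j : ℕ) (h : j < dmin s) : S s j = 0 := by
  by_contra h0
  have := Nat.sInf_le (show j ∈ {j | 0 < S s j} from Nat.pos_of_ne_zero h0)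
  exact absurd h (by unfold dmin; omega)

lemma key_shift {N : ℕ} (s sa : Fin N → ℕ) (hadj : Adjacent s sa)
    (L : ℕ) (hL : 1 ≤ L) (j : ℕ) : S sa j - L = S s j - (L - 1) := by
  rcases hadj with ⟨hs, j0, hj01, hj0d, rfl⟩ | ⟨rfl, j0, hj01, hj0N, rfl⟩
  · have htot : 0 < S s N := by
      by_contra h0
      apply hs
      funext i
      have hu : (Finset.univ.filter fun i : Fin N => (i : ℕ) < N) = Finset.univ := by
        ext i; simp [i.isLt]
      have : ∑ i : Fin N, s i = 0 := by
        have := (Nat.eq_zero_of_not_pos h0)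
        unfold S at this; rwa [hu] at this
      exact (Finset.sum_eq_zero_iff.mp this) i (Finset.mem_univ i)
    have hj0N : j0 ≤ N := le_trans hj0d (Nat.sInf_le htot)
    rw [S_add', S_avec' j0 j hj01 hj0N]
    by_cases hc : j0 ≤ j
    · rw [if_pos hc]; omega
    · rw [if_neg hc]
      have : S s j = 0 := S_zero_lt_dmin s j (lt_of_lt_of_le (by omega) hj0d)
      omega
  · have h0 : S (0 : Fin N → ℕ) j = 0 := by unfold S; simp
    rw [h0, S_avec' j0 j hj01 hj0N]
    split <;> omega

lemma offload_zero' (s : Fin N → ℕ) : offload s 0 = s := by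
  funext i
  unfold offload
  rw [S_succ' s (i : ℕ) i.isLt]
  simp

lemma offload_shift' {N : ℕ} (s sa : Fin N → ℕ) (hadj : Adjacent s sa)
    (L : ℕ) (hL : 1 ≤ L) : offload sa L = offload s (L - 1) := by
  funext i
  unfold offload
  rw [key_shift s sa hadj L hL, key_shift s sa hadj L hL]

lemma GA_shift {N : ℕ} (P : Params) (s sa : Fin N → ℕ) (hadj : Adjacent s sa)
    (L : ℕ) (hL : 1 ≤ L) (m : ℕ) : GA P m sa L = GA P m s (L - 1) := by
  have h2 : ∀ k, sdd sa L k = sdd s (L - 1) k := fun k => by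
    unfold sdd; rw [offload_shift' s sa hadj L hL]
  have h1 : ∀ k, sd sa L k = sd s (L - 1) k := fun k => by
    unfold sd; rw [h2 k]
  cases m with
  | zero => rfl
  | succ m => simp only [GA, h1, h2]

end Aux


/-- if s^a is adjacent to s then offloading the single most
imminent task of s^a yields s, and J^A_T(s^a, L) = J^A_T(s, L−1) + C_o for
every horizon T ≥ 1 and every 1 ≤ L ≤ |s^a|. -/
theorem adjacent_offload_one {N : ℕ} (hN : 1 ≤ N)
    (P : Params) (hCo : 0 < P.Co) (hCoCp : P.Co < P.Cp)
    (hpa0 : 0 ≤ P.pa) (hpa1 : P.pa ≤ 1) (hmu0 : 0 ≤ P.mu) (hmu1 : P.mu ≤ 1)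
    (hp : ∀ k ≤ N, 0 ≤ P.p k) (hpsum : ∑ k ∈ Finset.range (N + 1), P.p k = 1)
    (s sa : Fin N → ℕ) (hadj : Adjacent s sa) :
    offload sa 1 = s ∧
      ∀ T, 1 ≤ T → ∀ L, 1 ≤ L → L ≤ tot sa →
        JA P T sa L = JA P T s (L - 1) + P.Co := by
  have hoff : offload sa 1 = s := by
    rw [offload_shift' s sa hadj 1 le_rfl, offload_zero']
  refine ⟨hoff, ?_⟩
  intro T hT L hL1 hL2
  unfold JA costA
  rw [key_shift s sa hadj L hL1 1, GA_shift P s sa hadj L hL1]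
  have : (L : ℝ) = ((L - 1 : ℕ) : ℝ) + 1 := by
    rw [Nat.cast_sub hL1]; push_cast; ring
  rw [this]; ring
end
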